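/- With u₁(k) = ⌊a_k / √(2 - a_{k-1})⌋, the sequence k ↦ 2^(k-1) / u₁(k) (for k ≥ 2) converges to π/4 as k → ∞. -/

import Mathlib

open Filter

noncomputable def a : ℕ → ℝ
  | 0 => 0
  | k + 1 => Real.sqrt (2 + a k)

noncomputable def u₁ (k : ℕ) : ℤ := ⌊a k / Real.sqrt (2 - a (k - 1))⌋

/-!
Since `a k = 2 cos (π / 2 ^ (k + 1))` and `√(2 - a k) = 2 sin (π / 2 ^ (k + 2))`, we get
`u₁ (k + 1) = ⌊cot θ⌋` with `θ = π / 2 ^ (k + 2)`, so that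
`2 ^ k / u₁ (k + 1) = (π / 4) / (θ ⌊cot θ⌋)`. As `θ → 0⁺`, `θ cot θ = cos θ / sinc θ → 1`, and
`θ ⌊cot θ⌋` differs from `θ cot θ` by less than `θ`.
-/

open Topology Real

lemma a_eq_sqrtTwoAddSeries : a = sqrtTwoAddSeries 0 := by
  funext k
  induction k with
  | zero => rfl
  | succ k ih => rw [a, ih, sqrtTwoAddSeries]

lemma u₁_succ_eq_floor_cot (k : ℕ) : u₁ (k + 1) = ⌊cot (π / 2 ^ (k + 2))⌋ := by
  rw [u₁, Nat.add_sub_cancel, a_eq_sqrtTwoAddSeries, cot_eq_cos_div_sin,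
    cos_pi_over_two_pow (k + 1), sin_pi_over_two_pow_succ]
  congr 1
  ring

lemma tendsto_mul_cot_nhdsNE_zero : Tendsto (fun x => x * cot x) (𝓝[≠] 0) (𝓝 1) := by
  have hcont : Tendsto (fun x => cos x / sinc x) (𝓝 0) (𝓝 1) := by
    have h : ContinuousAt (fun x => cos x / sinc x) 0 :=
      continuous_cos.continuousAt.div continuous_sinc.continuousAt (by simp)
    rwa [ContinuousAt, cos_zero, sinc_zero, div_one] at h
  refine (hcont.mono_left nhdsWithin_le_nhds).congr' ?_
  filter_upwards [self_mem_nhdsWithin] with x (hx : x ≠ 0)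
  rw [sinc_of_ne_zero hx, cot_eq_cos_div_sin, div_div_eq_mul_div]
  ring

lemma tendsto_mul_floor_cot_nhdsGT_zero :
    Tendsto (fun x => x * ⌊cot x⌋) (𝓝[>] 0) (𝓝 1) := by
  have hcot : Tendsto (fun x => x * cot x) (𝓝[>] 0) (𝓝 1) :=
    tendsto_mul_cot_nhdsNE_zero.mono_left (nhdsWithin_mono 0 fun _ hx => ne_of_gt hx)
  have hlower : Tendsto (fun x => x * cot x - x) (𝓝[>] 0) (𝓝 1) := by
    simpa using hcot.sub (tendsto_id.mono_left nhdsWithin_le_nhds)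
  refine tendsto_of_tendsto_of_tendsto_of_le_of_le' hlower hcot ?_ ?_ <;>
    filter_upwards [self_mem_nhdsWithin] with x (hx : 0 < x)
  · nlinarith [Int.sub_one_lt_floor (cot x)]
  · exact mul_le_mul_of_nonneg_left (Int.floor_le _) hx.le

lemma tendsto_pi_div_two_pow_nhdsGT_zero :
    Tendsto (fun k : ℕ => π / 2 ^ (k + 3)) atTop (𝓝[>] 0) := by
  refine tendsto_nhdsWithin_iff.2 ⟨?_, .of_forall fun k => Set.mem_Ioi.2 (by positivity)⟩
  exact tendsto_const_nhds.div_atTop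
    ((tendsto_pow_atTop_atTop_of_one_lt one_lt_two).comp (tendsto_add_atTop_nat 3))

theorem stmt_12 :
    Tendsto (fun k : ℕ => (2 : ℝ) ^ (k + 1) / (u₁ (k + 2) : ℝ)) atTop
      (nhds (Real.pi / 4)) := by
  have hform : ∀ k : ℕ, (2 : ℝ) ^ (k + 1) / (u₁ (k + 2) : ℝ)
      = (π / 4) / (π / 2 ^ (k + 3) * ⌊cot (π / 2 ^ (k + 3))⌋) := by
    intro k
    rw [u₁_succ_eq_floor_cot, div_mul_eq_div_div, div_div_div_cancel_left' _ _ pi_ne_zero]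
    congr 1
    ring
  simp_rw [hform]
  have hlim := tendsto_mul_floor_cot_nhdsGT_zero.comp tendsto_pi_div_two_pow_nhdsGT_zero
  simpa [Pi.div_def, Function.comp_def] using tendsto_const_nhds.div hlim one_ne_zero
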